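/- arXiv:2111.07668 — 4 statements merged into one kernel-verified Lean document; each statement's English description precedes it below -/
import Mathlib

section
/- If F : ℝⁿ → ℝ is differentiable and strictly positively homogeneous of degree k ≥ 1 (i.e., F(αx) = α^k F(x) for all α > 0), then the Integrated Gradients attribution of F at input x with zero baseline along coordinate i, defined as IG_i(F,x) = ∫₀¹ (∂F/∂x_i)(αx) · x_i dα, equals (1/k) · x_i · (∂F/∂x_i)(x). -/
/-- Integrated Gradients of a strictly positively homogeneous (degree `k ≥ 1`),
continuously differentiable `F` with zero baseline equals `(1/k) * xᵢ * ∂F/∂xᵢ(x)`. -/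
theorem ig_of_positively_homogeneous
    (n : ℕ) (F : (Fin n → ℝ) → ℝ) (k : ℝ) (hk : 1 ≤ k)
    (hF : ContDiff ℝ 1 F)
    (hhom : ∀ α : ℝ, 0 < α → ∀ x : Fin n → ℝ, F (α • x) = α ^ k * F x)
    (x : Fin n → ℝ) (i : Fin n) :
    (∫ α in (0:ℝ)..1, fderiv ℝ F (α • x) (Pi.single i 1) * x i)
      = (1 / k) * (x i * fderiv ℝ F x (Pi.single i 1)) := by
  have hk0 : (0:ℝ) < k := lt_of_lt_of_le one_pos hk
  have hdF : Differentiable ℝ F := hF.differentiable one_ne_zero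
  set e : Fin n → ℝ := Pi.single i 1 with he
  have key : ∀ α : ℝ, 0 < α →
      fderiv ℝ F (α • x) e = α ^ (k - 1) * fderiv ℝ F x e := by
    intro α hα
    have hid : HasFDerivAt (fun y : Fin n → ℝ => α • y)
        (α • ContinuousLinearMap.id ℝ (Fin n → ℝ)) x :=
      ((ContinuousLinearMap.id ℝ (Fin n → ℝ)).hasFDerivAt).const_smul α
    have h1 : HasFDerivAt (fun y : Fin n → ℝ => F (α • y))
        ((fderiv ℝ F (α • x)).comp (α • ContinuousLinearMap.id ℝ (Fin n → ℝ))) x :=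
      (hdF (α • x)).hasFDerivAt.comp x hid
    have h2 : HasFDerivAt (fun y : Fin n → ℝ => F (α • y))
        (α ^ k • fderiv ℝ F x) x := by
      have : HasFDerivAt (fun y : Fin n → ℝ => α ^ k * F y)
          (α ^ k • fderiv ℝ F x) x := (hdF x).hasFDerivAt.const_mul (α ^ k)
      refine this.congr_of_eventuallyEq ?_
      filter_upwards with y using (hhom α hα y)
    have heq := h1.unique h2
    have happ := congrArg (fun L : (Fin n → ℝ) →L[ℝ] ℝ => L e) heq
    simp only [ContinuousLinearMap.comp_apply, ContinuousLinearMap.smul_apply,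
      ContinuousLinearMap.coe_smul', Pi.smul_apply, ContinuousLinearMap.id_apply,
      map_smul, smul_eq_mul] at happ
    have : fderiv ℝ F (α • x) e = α ^ k / α * fderiv ℝ F x e := by
      field_simp at happ ⊢
      linarith [happ]
    rw [this, Real.rpow_sub hα, Real.rpow_one]
  have hcongr : (∫ α in (0:ℝ)..1, fderiv ℝ F (α • x) e * x i)
      = ∫ α in (0:ℝ)..1, α ^ (k - 1) * fderiv ℝ F x e * x i := by
    apply intervalIntegral.integral_congr_ae
    filter_upwards with α hα
    rw [Set.uIoc_of_le (by norm_num : (0:ℝ) ≤ 1)] at hα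
    rw [key α hα.1]
  rw [hcongr]
  rw [intervalIntegral.integral_mul_const, intervalIntegral.integral_mul_const,
    integral_rpow (Or.inl (by linarith : (-1:ℝ) < k - 1))]
  rw [Real.zero_rpow (by linarith : k - 1 + 1 ≠ 0)]
  have : k - 1 + 1 = k := by ring
  rw [this, Real.one_rpow]
  ring
end

section
/- For a differentiable nonnegatively homogeneous function F : ℝⁿ → ℝ (F(αx) = αF(x) for α ≥ 0), the X-Gradient attribution XG_i(F, x) = x_i · (∂F/∂x_i)(x) equals the Integrated Gradients attribution with zero baseline: XG_i(F,x) = ∫₀¹ (∂F/∂x_i)(αx) · x_i dα. -/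
/-! Differentiating `F (c • y) = c • F y` in `y` shows that the derivative of a positively
homogeneous function is constant along open rays from the origin, so the Integrated Gradients
integrand is constant on `(0, 1]`. -/

open Set

theorem fderiv_pos_smul_eq_of_homogeneous {E G : Type*} [NormedAddCommGroup E] [NormedSpace ℝ E]
    [NormedAddCommGroup G] [NormedSpace ℝ G] {f : E → G}
    (hf : ∀ c : ℝ, 0 < c → ∀ x, f (c • x) = c • f x) {c : ℝ} (hc : 0 < c) (x : E) :
    fderiv ℝ f (c • x) = fderiv ℝ f x := by
  have hcomp : (fun y => f (c • y)) = c • f := funext (hf c hc)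
  have h := fderiv_comp_smul (f := f) (x := x) c
  rw [hcomp, fderiv_const_smul_field, Pi.smul_apply] at h
  exact (smul_right_injective _ hc.ne' h).symm

theorem xgradient_eq_integrated_gradients_general
    (n : ℕ) (F : (Fin n → ℝ) → ℝ)
    (hhom : ∀ α : ℝ, 0 ≤ α → ∀ x : Fin n → ℝ, F (α • x) = α * F x)
    (x : Fin n → ℝ) (i : Fin n) :
    x i * fderiv ℝ F x (Pi.single i 1)
      = ∫ α in (0:ℝ)..1, fderiv ℝ F (α • x) (Pi.single i 1) * x i := by
  have hsmul : ∀ α : ℝ, 0 < α → ∀ y : Fin n → ℝ, F (α • y) = α • F y :=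
    fun α hα => hhom α hα.le
  have hconst : ∫ α in (0:ℝ)..1, fderiv ℝ F (α • x) (Pi.single i 1) * x i
      = ∫ _ in (0:ℝ)..1, fderiv ℝ F x (Pi.single i 1) * x i := by
    refine intervalIntegral.integral_congr_ae (Filter.Eventually.of_forall fun α hα => ?_)
    rw [uIoc_of_le zero_le_one] at hα
    rw [fderiv_pos_smul_eq_of_homogeneous hsmul hα.1]
  rw [hconst, intervalIntegral.integral_const, sub_zero, one_smul, mul_comm]

/-- For a continuously differentiable nonnegatively homogeneous `F`, the X-Gradient
attribution equals Integrated Gradients with zero baseline. -/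
theorem xgradient_eq_integrated_gradients
    (n : ℕ) (F : (Fin n → ℝ) → ℝ)
    (hF : ContDiff ℝ 1 F)
    (hhom : ∀ α : ℝ, 0 ≤ α → ∀ x : Fin n → ℝ, F (α • x) = α * F x)
    (x : Fin n → ℝ) (i : Fin n) :
    x i * fderiv ℝ F x (Pi.single i 1)
      = ∫ α in (0:ℝ)..1, fderiv ℝ F (α • x) (Pi.single i 1) * x i :=
  xgradient_eq_integrated_gradients_general n F hhom x i
end

section
/- For a differentiable function F : ℝⁿ → ℝ that is strictly positively homogeneous of degree k ≥ 1, Input×Gradient equals k times Integrated Gradients with zero baseline: x_i · (∂F/∂x_i)(x) = k · IG_i(F, x, 0). -/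
/-- For a strictly positively homogeneous `F` of degree `k ≥ 1`, Input×Gradient equals
`k` times Integrated Gradients with zero baseline. -/
theorem input_times_gradient_eq_k_ig
    (n : ℕ) (F : (Fin n → ℝ) → ℝ) (k : ℝ) (hk : 1 ≤ k)
    (hF : ContDiff ℝ 1 F)
    (hhom : ∀ α : ℝ, 0 < α → ∀ x : Fin n → ℝ, F (α • x) = α ^ k * F x)
    (x : Fin n → ℝ) (i : Fin n) :
    x i * fderiv ℝ F x (Pi.single i 1)
      = k * ∫ α in (0:ℝ)..1, fderiv ℝ F (α • x) (Pi.single i 1) * x i := by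
  have hdiff : Differentiable ℝ F := hF.differentiable one_ne_zero
  set v : Fin n → ℝ := Pi.single i 1 with hv
  have hk0 : (0:ℝ) < k := lt_of_lt_of_le one_pos hk
  have key : ∀ α : ℝ, 0 < α →
      fderiv ℝ F (α • x) v = α ^ (k - 1) * fderiv ℝ F x v := by
    intro α hα
    have hG : (fun y : Fin n → ℝ => F (α • y)) = fun y => α ^ k * F y := by
      funext y; exact hhom α hα y
    have hsm : fderiv ℝ (fun y : Fin n → ℝ => α • y) x
        = α • ContinuousLinearMap.id ℝ (Fin n → ℝ) := by
      have h : (fun y : Fin n → ℝ => α • y)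
          = ⇑(α • ContinuousLinearMap.id ℝ (Fin n → ℝ)) := rfl
      rw [h, ContinuousLinearMap.fderiv]
    have h1 : fderiv ℝ (fun y => F (α • y)) x
        = (fderiv ℝ F (α • x)).comp (α • ContinuousLinearMap.id ℝ (Fin n → ℝ)) := by
      rw [show (fun y => F (α • y)) = F ∘ (fun y : Fin n → ℝ => α • y) from rfl]
      have hg : DifferentiableAt ℝ (fun y : Fin n → ℝ => α • y) x :=
        differentiableAt_id.const_smul α
      rw [fderiv_comp x (hdiff _) hg, hsm]
    have h2 : fderiv ℝ (fun y => α ^ k * F y) x = α ^ k • fderiv ℝ F x :=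
      fderiv_const_mul (hdiff x) (α ^ k)
    have h3 : α * fderiv ℝ F (α • x) v = α ^ k * fderiv ℝ F x v := by
      have := congrArg (fun L => L v) ((hG ▸ h1).symm.trans h2)
      simpa [mul_comm] using this
    have h4 : fderiv ℝ F (α • x) v = (α ^ k / α) * fderiv ℝ F x v := by
      field_simp
      linarith [h3]
    rw [h4, Real.rpow_sub_one hα.ne']
  have hint : ∫ α in (0:ℝ)..1, fderiv ℝ F (α • x) v * x i
      = ∫ α in (0:ℝ)..1, α ^ (k - 1) * (fderiv ℝ F x v * x i) := by
    apply intervalIntegral.integral_congr_ae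
    refine Filter.Eventually.of_forall (fun α hα => ?_)
    rw [Set.uIoc_of_le (by norm_num : (0:ℝ) ≤ 1)] at hα
    rw [key α hα.1]; ring
  have hrpow : ∫ α in (0:ℝ)..1, α ^ (k - 1) = 1 / k := by
    rw [integral_rpow (Or.inl (by linarith : (-1:ℝ) < k - 1))]
    rw [sub_add_cancel, Real.one_rpow, Real.zero_rpow hk0.ne']
    ring
  rw [hint, intervalIntegral.integral_mul_const, hrpow]
  field_simp
end

section
/- If F : ℝⁿ → ℝ is differentiable and nonnegatively homogeneous of degree 1, then for any input x and baseline x' = 0 that differ in exactly one coordinate i (i.e., x_j = 0 for j ≠ i, x_i ≠ 0) with F(x) ≠ F(0), the X-Gradient attribution to coordinate i is nonzero: x_i · (∂F/∂x_i)(x) ≠ 0. -/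
/-- Sensitivity (a) for X-Gradient: if input and zero baseline differ only in coordinate
`i` and the outputs differ, then the attribution to coordinate `i` is nonzero. -/
theorem xgradient_sensitivity_a
    (n : ℕ) (F : (Fin n → ℝ) → ℝ)
    (hF : Differentiable ℝ F)
    (hhom : ∀ α : ℝ, 0 ≤ α → ∀ x : Fin n → ℝ, F (α • x) = α * F x)
    (x : Fin n → ℝ) (i : Fin n)
    (hx : ∀ j : Fin n, j ≠ i → x j = 0) (hxi : x i ≠ 0)
    (hdiff : F x ≠ F 0) :
    x i * fderiv ℝ F x (Pi.single i 1) ≠ 0 := by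
  -- F 0 = 0
  have hF0 : F 0 = 0 := by
    have := hhom 0 le_rfl 0
    simpa using this
  -- Euler identity at x : fderiv F x x = F x
  have hEuler : fderiv ℝ F x x = F x := by
    have h1 : HasDerivAt (fun t : ℝ => F (t • x)) (fderiv ℝ F x x) 1 := by
      have hsmul : HasDerivAt (fun t : ℝ => t • x) x 1 := by
        simpa using (hasDerivAt_id (1 : ℝ)).smul_const x
      have hfd : HasFDerivAt F (fderiv ℝ F x) ((1:ℝ) • x) := by
        rw [one_smul]; exact (hF x).hasFDerivAt
      exact hfd.comp_hasDerivAt 1 hsmul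
    have h2 : HasDerivAt (fun t : ℝ => F (t • x)) (F x) 1 := by
      have heq : (fun t : ℝ => t * F x) =ᶠ[nhds (1 : ℝ)] fun t : ℝ => F (t • x) := by
        filter_upwards [eventually_gt_nhds (show (0:ℝ) < 1 by norm_num)] with t ht
        exact (hhom t ht.le x).symm
      have hmul : HasDerivAt (fun t : ℝ => t * F x) (F x) 1 := by
        simpa using (hasDerivAt_id (1 : ℝ)).mul_const (F x)
      exact hmul.congr_of_eventuallyEq heq.symm
    exact h1.unique h2
  -- x = x i • Pi.single i 1
  have hxeq : x = x i • (Pi.single i 1 : Fin n → ℝ) := by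
    funext j
    by_cases hj : j = i
    · subst hj; simp
    · simp [Pi.single_apply, hj, hx j hj]
  have : fderiv ℝ F x x = x i * fderiv ℝ F x (Pi.single i 1) := by
    have h := (fderiv ℝ F x).map_smul (x i) (Pi.single i 1 : Fin n → ℝ)
    rw [← hxeq] at h
    simpa using h
  rw [← this, hEuler]
  rw [hF0] at hdiff
  exact hdiff
end
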